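/- Define b : ℝ × P₂(ℝ) → ℝ by b(x, μ) := 2·sign(m(μ))·√|m(μ)|, where m(μ) := ∫_ℝ x dμ(x) and sign(x) := x/|x| for x ≠ 0, sign(0) := 0. Consider, for T > 0, the Fokker–Planck (characteristics) equation: y : [0,T] × [0,1] → ℝ with y_t(u) = ∫₀ᵗ b(y_s(u), μ_s) ds for all t ∈ [0,T] and u ∈ [0,1], where μ_s is the pushforward of Lebesgue measure on [0,1] under u ↦ y_s(u), with initial condition y_0 ≡ 0. Then both y¹_t(u) := 0 and y²_t(u) := t² are solutions; in particular uniqueness fails for this equation. -/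

import Mathlib

/-! Both candidate solutions are independent of `u`, so each `μ_s` is a Dirac mass and the
equation collapses to Peano's scalar equation `x(t) = ∫₀ᵗ 2 sign(x) √|x|`, of which `0` and `t²`
are the two classical solutions through the origin. -/

open MeasureTheory

/-- The Peano-type drift `b(x,μ) = 2 sign(m(μ)) √|m(μ)|` with `m(μ) = ∫ x dμ`. -/
noncomputable def peanoDrift (_x : ℝ) (μ : Measure ℝ) : ℝ :=
  2 * Real.sign (∫ x, x ∂μ) * Real.sqrt |∫ x, x ∂μ|

/-- `y` solves the Fokker–Planck characteristics equation
`y_t(u) = ∫₀ᵗ b(y_s(u), μ_s) ds` with `μ_s` the image of `Leb_{[0,1]}` under `y_s`,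
and initial condition `y_0 ≡ 0`. -/
def IsSol (T : ℝ) (y : ℝ → ℝ → ℝ) : Prop :=
  ∀ t ∈ Set.Icc (0:ℝ) T, ∀ u ∈ Set.Icc (0:ℝ) 1,
    y t u = ∫ s in Set.Icc (0:ℝ) t,
      peanoDrift (y s u) ((volume.restrict (Set.Icc (0:ℝ) 1)).map (y s))

lemma MeasureTheory.Measure.map_const_of_isProbabilityMeasure {α β : Type*} [MeasurableSpace α]
    [MeasurableSpace β] (μ : Measure α) [IsProbabilityMeasure μ] (c : β) :
    μ.map (fun _ => c) = Measure.dirac c := by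
  simp [Measure.map_const]

lemma peanoDrift_dirac (x c : ℝ) :
    peanoDrift x (Measure.dirac c) = 2 * Real.sign c * Real.sqrt |c| := by
  simp [peanoDrift, integral_dirac]

lemma isSol_iff_of_const {T : ℝ} (f : ℝ → ℝ) :
    IsSol T (fun t _ => f t) ↔ ∀ t ∈ Set.Icc (0:ℝ) T,
      f t = ∫ s in Set.Icc (0:ℝ) t, 2 * Real.sign (f s) * Real.sqrt |f s| := by
  have : IsProbabilityMeasure (volume.restrict (Set.Icc (0:ℝ) 1)) :=
    ⟨by simp [Real.volume_Icc]⟩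
  simp only [IsSol, Measure.map_const_of_isProbabilityMeasure, peanoDrift_dirac]
  exact ⟨fun h t ht => h t ht 0 ⟨le_rfl, zero_le_one⟩, fun h t ht _ _ => h t ht⟩

lemma two_mul_sign_sq_mul_sqrt_abs_sq {s : ℝ} (hs : 0 ≤ s) :
    2 * Real.sign (s ^ 2) * Real.sqrt |s ^ 2| = 2 * s := by
  rcases hs.eq_or_lt with rfl | hs_pos
  · simp
  · rw [Real.sign_of_pos (by positivity), abs_of_nonneg (by positivity), Real.sqrt_sq hs]
    ring

lemma isSol_zero (T : ℝ) : IsSol T (fun _ _ => 0) := by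
  rw [isSol_iff_of_const]
  intro t _
  simp

lemma isSol_sq (T : ℝ) : IsSol T (fun t _ => t ^ 2) := by
  rw [isSol_iff_of_const]
  intro t ht
  calc t ^ 2 = ∫ s in (0:ℝ)..t, 2 * s := by
        rw [intervalIntegral.integral_const_mul, integral_id]; ring
    _ = ∫ s in Set.Icc (0:ℝ) t, 2 * s := by
        rw [intervalIntegral.integral_of_le ht.1, integral_Icc_eq_integral_Ioc]
    _ = ∫ s in Set.Icc (0:ℝ) t, 2 * Real.sign (s ^ 2) * Real.sqrt |s ^ 2| :=
        setIntegral_congr_fun measurableSet_Icc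
          fun s hs => (two_mul_sign_sq_mul_sqrt_abs_sq hs.1).symm

theorem stmt13 (T : ℝ) (hT : 0 < T) :
    IsSol T (fun _ _ => 0) ∧ IsSol T (fun t _ => t ^ 2) ∧
    ¬ (∀ t ∈ Set.Icc (0:ℝ) T, ∀ u ∈ Set.Icc (0:ℝ) 1,
        (fun (_ _ : ℝ) => (0:ℝ)) t u = (fun (t : ℝ) (_ : ℝ) => t ^ 2) t u) := by
  refine ⟨isSol_zero T, isSol_sq T, fun h => ?_⟩
  have h_eq : (0:ℝ) = T ^ 2 := h T ⟨hT.le, le_rfl⟩ 0 ⟨le_rfl, zero_le_one⟩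
  exact (pow_pos hT 2).ne h_eq
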